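/- arXiv:2003.11221 — 3 statements merged into one kernel-verified Lean document; each statement's English description precedes it below -/
import Mathlib

section
/- Let β, γ, x₀, y₀ > 0 with z₀ ≥ 0 and x₀ + y₀ + z₀ = 1, and suppose v: ℝ≥0 → (v*, 1] is differentiable and satisfies v(0) = 1 and v'(t) = -β·v(t)·(x₀(1 - v(t)) + y₀ + (γ/β)·log v(t)). Then the functions x(t) = x₀·v(t), y(t) = (γ/β)·log v(t) - x₀·v(t) + x₀ + y₀, z(t) = -(γ/β)·log v(t) + z₀ satisfy the SIR system ẋ = -βxy, ẏ = βxy - γy, ż = γy with initial conditions x(0)=x₀, y(0)=y₀, z(0)=z₀. -/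
/-!
Along a solution, `y t = x₀ (1 - v t) + y₀ + (γ/β) log (v t)`, so the equation for `v` reads
`v' = -β v y`. Then `x = x₀ v` gives `x' = -β x y` at once, `z' = -(γ/β) v'/v = γ y`, and
`y` is the constant `x₀ + y₀ + z₀` minus `x + z`, so `y' = -x' - z' = β x y - γ y`.
-/

theorem HasDerivAt.neg_div_mul_log_add {v : ℝ → ℝ} {β w t : ℝ} (hβ : β ≠ 0) (hvt : v t ≠ 0)
    (hv : HasDerivAt v (-(β * v t * w)) t) (γ c : ℝ) :
    HasDerivAt (fun s => -(γ / β) * Real.log (v s) + c) (γ * w) t :=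
  (((hv.log hvt).const_mul (-(γ / β))).add_const c).congr_deriv (by field_simp)

theorem stmt_8_general (β γ x₀ y₀ z₀ vstar : ℝ) (hβ : 0 < β)
    (hvstar : vstar ∈ Set.Ioo (0 : ℝ) 1)
    (v : ℝ → ℝ) (hv0 : v 0 = 1)
    (hvmem : ∀ t : ℝ, 0 ≤ t → v t ∈ Set.Ioc vstar 1)
    (hv : ∀ t : ℝ, 0 ≤ t →
      HasDerivAt v (-(β * v t * (x₀ * (1 - v t) + y₀ + (γ / β) * Real.log (v t)))) t)
    (x y z : ℝ → ℝ)
    (hx : ∀ t, x t = x₀ * v t)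
    (hy : ∀ t, y t = (γ / β) * Real.log (v t) - x₀ * v t + x₀ + y₀)
    (hz : ∀ t, z t = -(γ / β) * Real.log (v t) + z₀) :
    x 0 = x₀ ∧ y 0 = y₀ ∧ z 0 = z₀ ∧
    (∀ t : ℝ, 0 ≤ t → HasDerivAt x (-(β * x t * y t)) t) ∧
    (∀ t : ℝ, 0 ≤ t → HasDerivAt y (β * x t * y t - γ * y t) t) ∧
    (∀ t : ℝ, 0 ≤ t → HasDerivAt z (γ * y t) t) := by
  have hv_pos : ∀ t, 0 ≤ t → 0 < v t := fun t ht => hvstar.1.trans (hvmem t ht).1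
  have hv_y : ∀ t, 0 ≤ t → HasDerivAt v (-(β * v t * y t)) t := fun t ht =>
    (hv t ht).congr_deriv (by rw [hy]; ring)
  have hx_deriv : ∀ t, 0 ≤ t → HasDerivAt x (-(β * x t * y t)) t := fun t ht =>
    (((hv_y t ht).const_mul x₀).congr_of_eventuallyEq (.of_forall hx)).congr_deriv
      (by rw [hx]; ring)
  have hz_deriv : ∀ t, 0 ≤ t → HasDerivAt z (γ * y t) t := fun t ht =>
    ((hv_y t ht).neg_div_mul_log_add hβ.ne' (hv_pos t ht).ne' γ z₀).congr_of_eventuallyEq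
      (.of_forall hz)
  have hy_conserved : ∀ s, y s = x₀ + y₀ + z₀ - x s - z s := fun s => by
    rw [hx, hy, hz]
    ring
  refine ⟨by simp [hx, hv0], by simp [hy, hv0], by simp [hz, hv0], hx_deriv,
    fun t ht => ?_, hz_deriv⟩
  exact ((((hx_deriv t ht).const_sub (x₀ + y₀ + z₀)).sub (hz_deriv t ht)).congr_of_eventuallyEq
    (.of_forall hy_conserved)).congr_deriv (by ring)

theorem stmt_8 (β γ x₀ y₀ z₀ vstar : ℝ) (hβ : 0 < β) (hγ : 0 < γ)
    (hx₀ : 0 < x₀) (hy₀ : 0 < y₀) (hz₀ : 0 ≤ z₀) (hsum : x₀ + y₀ + z₀ = 1)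
    (hvstar : vstar ∈ Set.Ioo (0 : ℝ) 1)
    (hroot : x₀ * (1 - vstar) + y₀ + (γ / β) * Real.log vstar = 0)
    (v : ℝ → ℝ) (hv0 : v 0 = 1)
    (hvmem : ∀ t : ℝ, 0 ≤ t → v t ∈ Set.Ioc vstar 1)
    (hv : ∀ t : ℝ, 0 ≤ t →
      HasDerivAt v (-(β * v t * (x₀ * (1 - v t) + y₀ + (γ / β) * Real.log (v t)))) t)
    (x y z : ℝ → ℝ)
    (hx : ∀ t, x t = x₀ * v t)
    (hy : ∀ t, y t = (γ / β) * Real.log (v t) - x₀ * v t + x₀ + y₀)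
    (hz : ∀ t, z t = -(γ / β) * Real.log (v t) + z₀) :
    x 0 = x₀ ∧ y 0 = y₀ ∧ z 0 = z₀ ∧
    (∀ t : ℝ, 0 ≤ t → HasDerivAt x (-(β * x t * y t)) t) ∧
    (∀ t : ℝ, 0 ≤ t → HasDerivAt y (β * x t * y t - γ * y t) t) ∧
    (∀ t : ℝ, 0 ≤ t → HasDerivAt z (γ * y t) t) :=
  stmt_8_general β γ x₀ y₀ z₀ vstar hβ hvstar v hv0 hvmem hv x y z hx hy hz
end

section
/- Let g(ξ) = 1/(ξ(βx₀(1-ξ) + βy₀ + γ·log ξ)) with β, γ, x₀, y₀ > 0, and let v* ∈ (0,1) be the unique root of f(ξ) = x₀(1-ξ) + y₀ + (γ/β)·log ξ. Then the improper integral ∫_{v*}^1 g(ξ) dξ diverges to +∞. -/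
open Real Filter Set intervalIntegral

theorem stmt_18 (β γ x₀ y₀ vstar : ℝ) (hβ : 0 < β) (hγ : 0 < γ)
    (hx₀ : 0 < x₀) (hy₀ : 0 < y₀)
    (hvstar : vstar ∈ Set.Ioo (0 : ℝ) 1)
    (hroot : x₀ * (1 - vstar) + y₀ + (γ / β) * Real.log vstar = 0)
    (huniq : ∀ v ∈ Set.Ioo (0 : ℝ) 1,
      x₀ * (1 - v) + y₀ + (γ / β) * Real.log v = 0 → v = vstar)
    (g : ℝ → ℝ)
    (hg : ∀ ξ, g ξ = 1 / (ξ * (β * x₀ * (1 - ξ) + β * y₀ + γ * Real.log ξ))) :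
    Filter.Tendsto (fun a => ∫ ξ in a..1, g ξ)
      (nhdsWithin vstar (Set.Ioi vstar)) Filter.atTop := by
  obtain ⟨hv0, hv1⟩ := hvstar
  set f : ℝ → ℝ := fun ξ => x₀ * (1 - ξ) + y₀ + (γ / β) * Real.log ξ with hf
  have hcont : ContinuousOn f {x : ℝ | x ≠ 0} := by
    apply ContinuousOn.add
    · exact (continuousOn_const.mul (continuousOn_const.sub continuousOn_id)).add
        continuousOn_const
    · exact continuousOn_const.mul Real.continuousOn_log
  have hf1 : f 1 = y₀ := by simp [hf]
  -- f is positive on (vstar, 1]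
  have hfpos : ∀ ξ ∈ Set.Ioc vstar 1, 0 < f ξ := by
    rintro ξ ⟨h1, h2⟩
    by_contra h
    push_neg at h
    have hsub : Set.Icc ξ 1 ⊆ {x : ℝ | x ≠ 0} := by
      intro x hx
      have : 0 < x := lt_of_lt_of_le (lt_trans hv0 h1) hx.1
      exact ne_of_gt this
    have := intermediate_value_Icc h2 (hcont.mono hsub)
    obtain ⟨c, hc, hc0⟩ := this ⟨h, by rw [hf1]; exact hy₀.le⟩
    have hcne1 : c < 1 := by
      rcases lt_or_eq_of_le hc.2 with h' | h'
      · exact h'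
      · rw [h'] at hc0; rw [hf1] at hc0; exact absurd hc0 (ne_of_gt hy₀)
    have hcv : c = vstar :=
      huniq c ⟨lt_trans hv0 (lt_of_lt_of_le h1 hc.1), hcne1⟩ hc0
    have : vstar < c := lt_of_lt_of_le h1 hc.1
    rw [hcv] at this
    exact lt_irrefl _ this
  have hβγ : β * (γ / β) = γ := by field_simp
  -- denominator identity
  have hden : ∀ ξ, β * x₀ * (1 - ξ) + β * y₀ + γ * Real.log ξ = β * f ξ := by
    intro ξ; simp only [hf]
    field_simp
  -- key pointwise bound
  have hkey : ∀ ξ ∈ Set.Ioc vstar 1, (vstar / γ) * (ξ - vstar)⁻¹ ≤ g ξ := by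
    rintro ξ ⟨h1, h2⟩
    have hξ0 : 0 < ξ := lt_trans hv0 h1
    have hfp : 0 < f ξ := hfpos ξ ⟨h1, h2⟩
    have hlog : Real.log ξ - Real.log vstar ≤ ξ / vstar - 1 := by
      have := Real.log_le_sub_one_of_pos (div_pos hξ0 hv0)
      rwa [Real.log_div (ne_of_gt hξ0) (ne_of_gt hv0)] at this
    have hfle : f ξ ≤ (γ / β) * ((ξ - vstar) / vstar) := by
      have hdiff : f ξ = x₀ * (vstar - ξ) + (γ / β) * (Real.log ξ - Real.log vstar) := by
        have : f ξ - (x₀ * (1 - vstar) + y₀ + (γ / β) * Real.log vstar)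
            = x₀ * (vstar - ξ) + (γ / β) * (Real.log ξ - Real.log vstar) := by
          simp [hf]; ring
        rw [hroot] at this; linarith
      have h3 : x₀ * (vstar - ξ) ≤ 0 := mul_nonpos_of_nonneg_of_nonpos hx₀.le (by linarith)
      have h4 : (γ / β) * (Real.log ξ - Real.log vstar) ≤ (γ / β) * (ξ / vstar - 1) :=
        mul_le_mul_of_nonneg_left hlog (le_of_lt (div_pos hγ hβ))
      have h5 : ξ / vstar - 1 = (ξ - vstar) / vstar := by field_simp
      rw [hdiff]; rw [h5] at h4; linarith
    have hβf : β * f ξ ≤ γ * ((ξ - vstar) / vstar) := by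
      have := mul_le_mul_of_nonneg_left hfle hβ.le
      rwa [← mul_assoc, hβγ] at this
    have hξβf : ξ * (β * f ξ) ≤ γ * ((ξ - vstar) / vstar) := by
      have : ξ * (β * f ξ) ≤ 1 * (β * f ξ) :=
        mul_le_mul_of_nonneg_right h2 (mul_pos hβ hfp).le
      rw [one_mul] at this; exact le_trans this hβf
    have hpos1 : 0 < ξ * (β * f ξ) := mul_pos hξ0 (mul_pos hβ hfp)
    rw [hg, hden]
    rw [one_div]
    have := one_div_le_one_div_of_le hpos1 hξβf
    rw [one_div, one_div] at this
    calc (vstar / γ) * (ξ - vstar)⁻¹ = (γ * ((ξ - vstar) / vstar))⁻¹ := by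
          rw [mul_inv, ← one_div, ← one_div]
          field_simp
      _ ≤ (ξ * (β * f ξ))⁻¹ := this
  -- the lower comparison function and its integral
  have hlower : ∀ a ∈ Set.Ioo vstar 1,
      (vstar / γ) * (Real.log (1 - vstar) - Real.log (a - vstar)) ≤ ∫ ξ in a..1, g ξ := by
    rintro a ⟨ha1, ha2⟩
    have ha0 : 0 < a := lt_trans hv0 ha1
    -- continuity of g on [a,1]
    have hgcont : ContinuousOn g (Set.Icc a 1) := by
      have : ContinuousOn (fun ξ => 1 / (ξ * (β * x₀ * (1 - ξ) + β * y₀ + γ * Real.log ξ)))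
          (Set.Icc a 1) := by
        apply ContinuousOn.div continuousOn_const
        · apply ContinuousOn.mul continuousOn_id
          apply ContinuousOn.add
          · exact (continuousOn_const.mul (continuousOn_const.sub continuousOn_id)).add
              continuousOn_const
          · exact continuousOn_const.mul (Real.continuousOn_log.mono
              (fun x hx => ne_of_gt (lt_of_lt_of_le ha0 hx.1)))
        · intro x hx
          have hx0 : 0 < x := lt_of_lt_of_le ha0 hx.1
          have hfx : 0 < f x := hfpos x ⟨lt_of_lt_of_le ha1 hx.1, hx.2⟩
          rw [hden]
          exact ne_of_gt (mul_pos hx0 (mul_pos hβ hfx))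
      exact this.congr (fun x _ => hg x)
    have hhcont : ContinuousOn (fun ξ : ℝ => (vstar / γ) * (ξ - vstar)⁻¹) (Set.Icc a 1) := by
      apply ContinuousOn.mul continuousOn_const
      apply ContinuousOn.inv₀ (continuousOn_id.sub continuousOn_const)
      intro x hx
      exact ne_of_gt (by linarith [hx.1] : (0:ℝ) < x - vstar)
    have hab : a ≤ 1 := ha2.le
    have hgint : IntervalIntegrable g MeasureTheory.volume a 1 :=
      hgcont.intervalIntegrable_of_Icc hab
    have hhint : IntervalIntegrable (fun ξ : ℝ => (vstar / γ) * (ξ - vstar)⁻¹)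
        MeasureTheory.volume a 1 := hhcont.intervalIntegrable_of_Icc hab
    have hmono : ∫ ξ in a..1, (vstar / γ) * (ξ - vstar)⁻¹ ≤ ∫ ξ in a..1, g ξ := by
      apply intervalIntegral.integral_mono_on hab hhint hgint
      intro x hx
      exact hkey x ⟨lt_of_lt_of_le ha1 hx.1, hx.2⟩
    have hcalc : ∫ ξ in a..1, (vstar / γ) * (ξ - vstar)⁻¹
        = (vstar / γ) * (Real.log (1 - vstar) - Real.log (a - vstar)) := by
      rw [intervalIntegral.integral_const_mul]
      congr 1
      have := intervalIntegral.integral_comp_sub_right (fun x : ℝ => x⁻¹) vstar (a := a) (b := 1)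
      rw [this]
      rw [integral_inv]
      · rw [Real.log_div (by linarith) (by linarith)]
      · intro h
        rcases Set.mem_uIcc.1 h with ⟨h1, _⟩ | ⟨_, h2⟩
        · linarith
        · linarith
    rw [← hcalc]; exact hmono
  -- limit of the lower bound
  have hlim : Filter.Tendsto
      (fun a => (vstar / γ) * (Real.log (1 - vstar) - Real.log (a - vstar)))
      (nhdsWithin vstar (Set.Ioi vstar)) Filter.atTop := by
    have hsub : Filter.Tendsto (fun a => a - vstar) (nhdsWithin vstar (Set.Ioi vstar))
        (nhdsWithin 0 (Set.Ioi 0)) := by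
      apply tendsto_nhdsWithin_of_tendsto_nhds_of_eventually_within
      · have h0 : Filter.Tendsto (fun a : ℝ => a - vstar) (nhds vstar) (nhds (vstar - vstar)) :=
          Filter.Tendsto.sub tendsto_id tendsto_const_nhds
        rw [sub_self] at h0
        exact h0.mono_left nhdsWithin_le_nhds
      · filter_upwards [self_mem_nhdsWithin] with a ha
        simpa [sub_pos] using ha
    have hloglim : Filter.Tendsto (fun a => Real.log (a - vstar))
        (nhdsWithin vstar (Set.Ioi vstar)) Filter.atBot :=
      Real.tendsto_log_nhdsGT_zero.comp hsub
    have h1 : Filter.Tendsto (fun a => Real.log (1 - vstar) - Real.log (a - vstar))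
        (nhdsWithin vstar (Set.Ioi vstar)) Filter.atTop := by
      apply Filter.tendsto_atTop_add_const_left
      exact Filter.tendsto_neg_atBot_atTop.comp hloglim
    exact h1.const_mul_atTop (div_pos hv0 hγ)
  apply Filter.tendsto_atTop_mono' _ _ hlim
  filter_upwards [Ioo_mem_nhdsGT_of_mem (Set.mem_Ico.2 ⟨le_refl _, hv1⟩)] with a ha
  exact hlower a ha
end

section
/- Let 0 < γ < β and x₀ ∈ (0,1] with βx₀ > γ. The peak infected fraction y_max(β) = (γ/β)·log(γ/(βx₀)) - γ/β + x₀ + y₀, viewed as a function of β on (γ/x₀, ∞), is strictly increasing in β. -/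
/-
With θ = γ / β, the peak is θ log (θ / x₀) - θ + x₀ + y₀, whose θ-derivative is log (θ / x₀) < 0
for 0 < θ < x₀. Since θ is strictly decreasing in β and maps (γ / x₀, ∞) into (0, x₀), the peak
is the composition of two strictly decreasing maps, hence strictly increasing in β.
-/

open Real Set

lemma hasDerivAt_mul_log_div_sub {x θ : ℝ} (hx : x ≠ 0) (hθ : θ ≠ 0) :
    HasDerivAt (fun t => t * log (t / x) - t) (log (θ / x)) θ := by
  have hdiv : HasDerivAt (fun t => t / x) (1 / x) θ := (hasDerivAt_id θ).div_const x
  have hlog := hdiv.log (div_ne_zero hθ hx)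
  refine (((hasDerivAt_id' θ).mul hlog).sub (hasDerivAt_id' θ)).congr_deriv ?_
  field_simp
  ring

lemma strictAntiOn_mul_log_div_sub {x : ℝ} (hx : 0 < x) :
    StrictAntiOn (fun θ => θ * log (θ / x) - θ) (Ioc 0 x) := by
  apply strictAntiOn_of_deriv_neg (convex_Ioc 0 x)
  · intro θ hθ
    exact (hasDerivAt_mul_log_div_sub hx.ne' hθ.1.ne').continuousAt.continuousWithinAt
  · intro θ hθ
    rw [interior_Ioc] at hθ
    rw [(hasDerivAt_mul_log_div_sub hx.ne' hθ.1.ne').deriv]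
    exact log_neg (div_pos hθ.1 hx) ((div_lt_one hx).mpr hθ.2)

lemma strictAntiOn_const_div {c : ℝ} (hc : 0 < c) : StrictAntiOn (fun β => c / β) (Ioi 0) :=
  fun _ ha _ _ hab => div_lt_div_of_pos_left hc ha hab

lemma mapsTo_const_div_Ioi {c x : ℝ} (hc : 0 < c) (hx : 0 < x) :
    MapsTo (fun β => c / β) (Ioi (c / x)) (Ioc 0 x) := by
  intro β (hβ : c / x < β)
  have hβ0 : 0 < β := (div_pos hc hx).trans hβ
  refine ⟨div_pos hc hβ0, (div_le_iff₀ hβ0).mpr ?_⟩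
  nlinarith [(div_lt_iff₀ hx).mp hβ]

theorem stmt_19_general (γ x₀ y₀ : ℝ) (hγ : 0 < γ) (hx₀ : x₀ ∈ Set.Ioc (0 : ℝ) 1) :
    StrictMonoOn
      (fun β : ℝ => (γ / β) * Real.log (γ / (β * x₀)) - γ / β + x₀ + y₀)
      (Set.Ioi (γ / x₀)) := by
  have hpeak : StrictMonoOn ((fun θ => θ * log (θ / x₀) - θ) ∘ fun β => γ / β) (Ioi (γ / x₀)) :=
    (strictAntiOn_mul_log_div_sub hx₀.1).comp
      ((strictAntiOn_const_div hγ).mono (Ioi_subset_Ioi (div_pos hγ hx₀.1).le))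
      (mapsTo_const_div_Ioi hγ hx₀.1)
  intro a ha b hb hab
  simpa only [Function.comp, div_div, add_lt_add_iff_right] using hpeak ha hb hab

theorem stmt_19 (γ x₀ y₀ : ℝ) (hγ : 0 < γ) (hx₀ : x₀ ∈ Set.Ioc (0 : ℝ) 1) (hy₀ : 0 < y₀) :
    StrictMonoOn
      (fun β : ℝ => (γ / β) * Real.log (γ / (β * x₀)) - γ / β + x₀ + y₀)
      (Set.Ioi (γ / x₀)) :=
  stmt_19_general γ x₀ y₀ hγ hx₀
end
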